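/- Let N = F_2[x_2, x_3] with the differential Q_0 defined by Q_0(x_2^i x_3^j) = x_2^{i−1} x_3^{j+1} if i > 0 and j is even, and Q_0(x_2^i x_3^j) = 0 otherwise, and let N_σ be the span of the monomials of polynomial degree σ, graded internally by deg(x_2^i x_3^j) = 2i + 3j. Then Q_0 preserves each N_σ, Q_0^2 = 0, and the homology H_k(N_σ; Q_0) := ker(Q_0)_k / im(Q_0)_k is one-dimensional, generated by the class of x_3^σ, when σ is even and k = 3σ, and is zero in all other cases (in particular H_•(N_σ;Q_0) = 0 for all odd σ). -/
import Mathlib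


noncomputable section

/-- The polynomial algebra `N = 𝔽₂[x₂, x₃]`, with the monomial `x₂^i x₃^j` encoded as the
pair `(i, j)`. -/
abbrev PolyN : Type := (ℕ × ℕ) →₀ ZMod 2

/-- The differential on monomials: `Q₀(x₂^i x₃^j) = x₂^{i-1} x₃^{j+1}` if `i > 0` and `j` is
even, and `0` otherwise. -/
def q0aux (p : ℕ × ℕ) : PolyN :=
  if 0 < p.1 ∧ Even p.2 then Finsupp.single (p.1 - 1, p.2 + 1) 1 else 0

/-- The `𝔽₂`-linear extension of `q0aux` to `N = 𝔽₂[x₂, x₃]`. -/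
def polyQ0 : PolyN →ₗ[ZMod 2] PolyN :=
  Finsupp.lsum (ZMod 2) fun p => LinearMap.toSpanSingleton (ZMod 2) PolyN (q0aux p)

/-- `N_σ`: the span of the monomials of polynomial degree `σ`. -/
def polyDeg (σ : ℕ) : Submodule (ZMod 2) PolyN :=
  Finsupp.supported (ZMod 2) (ZMod 2) {p : ℕ × ℕ | p.1 + p.2 = σ}

/-- The part of `N_σ` of internal degree `k`, where `deg (x₂^i x₃^j) = 2i + 3j`. -/
def polyGr (σ : ℕ) (k : ℤ) : Submodule (ZMod 2) PolyN :=
  Finsupp.supported (ZMod 2) (ZMod 2)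
    {p : ℕ × ℕ | p.1 + p.2 = σ ∧ 2 * (p.1 : ℤ) + 3 * (p.2 : ℤ) = k}


lemma polyQ0_single (p : ℕ × ℕ) (c : ZMod 2) :
    polyQ0 (Finsupp.single p c) = c • q0aux p := by
  simp [polyQ0]

lemma polyQ0_apply (f : PolyN) :
    polyQ0 f = ∑ p ∈ f.support, f p • q0aux p := by
  simp [polyQ0, Finsupp.lsum_apply, Finsupp.sum]

/-- `Q₀` preserves each `N_σ`, squares to zero, and the homology `H_k(N_σ; Q₀)` is
one-dimensional, generated by the class of `x₃^σ`, when `σ` is even and `k = 3σ`, and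
vanishes in all other cases. -/
theorem polyN_Q0_homology :
    (∀ σ : ℕ, ∀ f ∈ polyDeg σ, polyQ0 f ∈ polyDeg σ) ∧
    (∀ f : PolyN, polyQ0 (polyQ0 f) = 0) ∧
    (∀ σ : ℕ, Even σ →
      (LinearMap.ker polyQ0 ⊓ polyGr σ (3 * (σ : ℤ)) =
        Submodule.map polyQ0 (polyGr σ (3 * (σ : ℤ) - 1)) ⊔
          Submodule.span (ZMod 2) {Finsupp.single ((0 : ℕ), σ) (1 : ZMod 2)}) ∧
      Finsupp.single ((0 : ℕ), σ) (1 : ZMod 2) ∉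
        Submodule.map polyQ0 (polyGr σ (3 * (σ : ℤ) - 1))) ∧
    (∀ (σ : ℕ) (k : ℤ), ¬(Even σ ∧ k = 3 * (σ : ℤ)) →
      LinearMap.ker polyQ0 ⊓ polyGr σ k ≤ Submodule.map polyQ0 (polyGr σ (k - 1))) := by
  refine ⟨?_, ?_, ?_, ?_⟩
  · -- Q0 preserves polyDeg
    intro σ f hf
    rw [polyQ0_apply]
    refine Submodule.sum_mem _ fun p hp => Submodule.smul_mem _ _ ?_
    have hpσ : p.1 + p.2 = σ := hf hp
    unfold q0aux
    split_ifs with h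
    · apply Finsupp.single_mem_supported
      simp only [Set.mem_setOf_eq]
      omega
    · exact Submodule.zero_mem _
  · -- Q0 ∘ Q0 = 0
    have h : polyQ0 ∘ₗ polyQ0 = 0 := by
      apply Finsupp.lhom_ext
      intro p c
      simp only [LinearMap.comp_apply, LinearMap.zero_apply, polyQ0_single, map_smul]
      unfold q0aux
      split_ifs with h1
      · rw [polyQ0_single]
        have : q0aux (p.1 - 1, p.2 + 1) = 0 := by
          unfold q0aux
          rw [if_neg]
          simp [Nat.even_add_one, h1.2]
        rw [this]
        simp
      · simp
    intro f
    exact LinearMap.congr_fun h f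
  · -- the homology at k = 3σ, σ even
    intro σ hσ
    have hmap : Submodule.map polyQ0 (polyGr σ (3 * (σ : ℤ) - 1)) = ⊥ := by
      rw [Submodule.eq_bot_iff]
      rintro x ⟨f, hf, rfl⟩
      rw [polyQ0_apply]
      apply Finset.sum_eq_zero
      intro p hp
      obtain ⟨h1, h2⟩ := hf hp
      have hodd : ¬ Even p.2 := by
        intro he
        rw [Nat.even_iff] at he
        rw [Nat.even_iff] at hσ
        omega
      unfold q0aux
      rw [if_neg (by tauto)]
      simp
    constructor
    · rw [hmap, bot_sup_eq]
      apply le_antisymm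
      · rintro f ⟨hker, hgr⟩
        have hsub : f.support ⊆ {((0 : ℕ), σ)} := by
          intro p hp
          obtain ⟨h1, h2⟩ := hgr hp
          simp only [Finset.mem_singleton]
          have hp1 : p.1 = 0 := by omega
          have hp2 : p.2 = σ := by omega
          exact Prod.ext hp1 hp2
        rw [Finsupp.support_subset_singleton.mp hsub]
        rw [show Finsupp.single ((0 : ℕ), σ) (f ((0 : ℕ), σ)) =
            (f ((0 : ℕ), σ)) • Finsupp.single ((0 : ℕ), σ) (1 : ZMod 2) by
          simp [Finsupp.smul_single]]
        exact Submodule.smul_mem _ _ (Submodule.mem_span_singleton_self _)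
      · rw [Submodule.span_le, Set.singleton_subset_iff]
        refine Submodule.mem_inf.mpr ⟨?_, ?_⟩
        · rw [LinearMap.mem_ker, polyQ0_single]
          unfold q0aux
          rw [if_neg (by simp)]
          simp
        · apply Finsupp.single_mem_supported
          simp only [Set.mem_setOf_eq]
          constructor <;> push_cast <;> ring
    · rw [hmap]
      simp only [Submodule.mem_bot]
      intro h
      exact one_ne_zero (Finsupp.single_eq_zero.mp h)
  · -- vanishing elsewhere
    intro σ k hk f hf
    obtain ⟨hker, hgr⟩ := Submodule.mem_inf.mp hf
    rcases eq_or_ne f 0 with h0 | h0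
    · rw [h0]; exact Submodule.zero_mem _
    · obtain ⟨⟨i, j⟩, hq⟩ := Finsupp.support_nonempty_iff.mpr h0
      obtain ⟨h1, h2⟩ := hgr hq
      simp only at h1 h2
      have hsub : f.support ⊆ {((i : ℕ), j)} := by
        intro p hp
        obtain ⟨h1', h2'⟩ := hgr hp
        simp only [Finset.mem_singleton]
        have hp1 : p.1 = i := by omega
        have hp2 : p.2 = j := by omega
        exact Prod.ext hp1 hp2
      have hf' : f = Finsupp.single (i, j) (f (i, j)) :=
        Finsupp.support_subset_singleton.mp hsub
      set c := f (i, j) with hc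
      have hcne : c ≠ 0 := Finsupp.mem_support_iff.mp hq
      rw [LinearMap.mem_ker, hf', polyQ0_single] at hker
      have hq0 : q0aux (i, j) = 0 := by
        rcases smul_eq_zero.mp hker with h' | h'
        · exact absurd h' hcne
        · exact h'
      have hcond : ¬ (0 < i ∧ Even j) := by
        intro hco
        unfold q0aux at hq0
        rw [if_pos hco] at hq0
        exact one_ne_zero (Finsupp.single_eq_zero.mp hq0)
      by_cases hj : Even j
      · -- then i = 0, so σ even and k = 3σ: contradiction
        have hi : i = 0 := by
          by_contra hi
          exact hcond ⟨Nat.pos_of_ne_zero hi, hj⟩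
        refine absurd ⟨?_, ?_⟩ hk
        · have : σ = j := by omega
          rwa [this]
        · omega
      · -- j odd: f is the image of x₂^{i+1} x₃^{j-1}
        have hj1 : 1 ≤ j := by
          rcases Nat.eq_zero_or_pos j with h' | h'
          · exact absurd (h' ▸ Even.zero) hj
          · exact h'
        refine ⟨Finsupp.single (i + 1, j - 1) c, ?_, ?_⟩
        · apply Finsupp.single_mem_supported
          simp only [Set.mem_setOf_eq]
          constructor
          · omega
          · omega
        · rw [polyQ0_single]
          unfold q0aux
          rw [if_pos]
          · have he : ((i + 1, j - 1).1 - 1, (i + 1, j - 1).2 + 1) = (i, j) := by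
              simp only [Prod.mk.injEq]
              omega
            rw [he, hf']
            simp [Finsupp.smul_single]
          · refine ⟨by simp, ?_⟩
            simp only
            rw [Nat.even_iff] at hj ⊢
            omega
end
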